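/- Let n ≥ 2, 1 ≤ p < n, and let α, β, α' ∈ ℝ satisfy αp > 1−n, (α+β)p > −n, and α' > α. Then for every constant C > 0 there exists a continuously differentiable function u : ℝⁿ → ℝ with compact support such that (∫_{ℝⁿ} (|x|^β |x'|^α |u(x)|)^p dx)^{1/p} > C (∫_{ℝⁿ} (|x|^{β+α−α'} |x'|^{α'+1} |∇u(x)|)^p dx)^{1/p}; i.e., the Hardy-type inequality fails in general when α' > α. -/

import Mathlib

/-!
Concentrate a bump function on the ball of radius `δ` around a point `c` with `|c| ≈ 1` and
`|c'| = 2δ`. On that ball `|x| ≈ 1` and `|x'| ≈ δ`, while `|∇u| ≲ 1/δ`, so the left-hand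
integral is `≳ δ^(αp + n)` and the right-hand one `≲ δ^(α'p + n)`. Since `α' > α`, their ratio
is unbounded as `δ → 0`.
-/

open MeasureTheory

/-- The Euclidean norm of the first `n-1` coordinates of `x ∈ ℝⁿ`. -/
noncomputable def primeNorm {n : ℕ} (x : EuclideanSpace ℝ (Fin n)) : ℝ :=
  Real.sqrt (∑ i : Fin n, if (i : ℕ) + 1 < n then x i ^ 2 else 0)

open Metric Set Filter Topology

section PrimeNorm

variable {n : ℕ}

noncomputable def primeProj (x : EuclideanSpace ℝ (Fin n)) : EuclideanSpace ℝ (Fin n) :=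
  WithLp.toLp 2 fun i => if (i : ℕ) + 1 < n then x i else 0

lemma primeNorm_nonneg (x : EuclideanSpace ℝ (Fin n)) : 0 ≤ primeNorm x := Real.sqrt_nonneg _

lemma primeProj_apply (x : EuclideanSpace ℝ (Fin n)) (i : Fin n) :
    primeProj x i = if (i : ℕ) + 1 < n then x i else 0 := rfl

lemma primeNorm_eq_norm_primeProj (x : EuclideanSpace ℝ (Fin n)) :
    primeNorm x = ‖primeProj x‖ := by
  rw [EuclideanSpace.norm_eq, primeNorm]
  congr 1
  refine Finset.sum_congr rfl fun i _ => ?_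
  rw [primeProj_apply, Real.norm_eq_abs, sq_abs]
  split_ifs <;> simp

lemma primeProj_sub (x y : EuclideanSpace ℝ (Fin n)) :
    primeProj (x - y) = primeProj x - primeProj y := by
  ext i
  simp only [primeProj_apply, PiLp.sub_apply]
  split_ifs <;> simp

lemma norm_primeProj_le (x : EuclideanSpace ℝ (Fin n)) : ‖primeProj x‖ ≤ ‖x‖ := by
  rw [EuclideanSpace.norm_eq, EuclideanSpace.norm_eq]
  gcongr with i
  rw [primeProj_apply]
  split_ifs <;> simp

lemma abs_primeNorm_sub_primeNorm_le (x y : EuclideanSpace ℝ (Fin n)) :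
    |primeNorm x - primeNorm y| ≤ ‖x - y‖ := by
  rw [primeNorm_eq_norm_primeProj, primeNorm_eq_norm_primeProj]
  calc |‖primeProj x‖ - ‖primeProj y‖| ≤ ‖primeProj x - primeProj y‖ := abs_norm_sub_norm_le _ _
    _ ≤ ‖x - y‖ := primeProj_sub x y ▸ norm_primeProj_le _

lemma exists_primeNorm_eq_and_abs_norm_sub_one_le (hn : 2 ≤ n) {a : ℝ} (ha : 0 ≤ a) :
    ∃ c : EuclideanSpace ℝ (Fin n), primeNorm c = a ∧ |‖c‖ - 1| ≤ a := by
  set v := EuclideanSpace.single (⟨0, by omega⟩ : Fin n) a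
  set e := EuclideanSpace.single (⟨n - 1, by omega⟩ : Fin n) (1 : ℝ)
  have hv : ‖v‖ = a := by simp [v, abs_of_nonneg ha]
  have hproj : primeProj (v + e) = v := by
    ext i
    simp only [primeProj_apply, PiLp.add_apply, v, e, PiLp.single_apply, Fin.ext_iff]
    split_ifs <;> first | omega | simp_all
  refine ⟨v + e, by rw [primeNorm_eq_norm_primeProj, hproj, hv], ?_⟩
  calc |‖v + e‖ - 1| = |‖v + e‖ - ‖e‖| := by simp [e]
    _ ≤ ‖v + e - e‖ := abs_norm_sub_norm_le _ _
    _ = a := by rw [add_sub_cancel_right, hv]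

lemma norm_mem_Icc_and_primeNorm_div_mem_Icc {c x : EuclideanSpace ℝ (Fin n)} {δ : ℝ}
    (hδ : 0 < δ) (hδ6 : δ ≤ 1 / 6) (hc : primeNorm c = 2 * δ) (hc' : |‖c‖ - 1| ≤ 2 * δ)
    (hx : x ∈ closedBall c δ) : ‖x‖ ∈ Icc (1 / 2) 2 ∧ primeNorm x / δ ∈ Icc 1 3 := by
  rw [mem_closedBall, dist_eq_norm] at hx
  have hnorm := (abs_norm_sub_norm_le x c).trans hx
  have hprime := (abs_primeNorm_sub_primeNorm_le x c).trans hx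
  rw [abs_le] at hnorm hprime hc'
  rw [mem_Icc, mem_Icc, le_div_iff₀ hδ, div_le_iff₀ hδ]
  refine ⟨⟨?_, ?_⟩, ?_, ?_⟩ <;> linarith

end PrimeNorm

lemma exists_bump_norm_fderiv_le {E : Type*} [NormedAddCommGroup E] [NormedSpace ℝ E]
    [FiniteDimensional ℝ E] :
    ∃ M ≥ 0, ∀ (c : E) {r : ℝ}, 0 < r → ∃ u : E → ℝ, ContDiff ℝ 1 u ∧ HasCompactSupport u ∧
      EqOn u 1 (closedBall c (r / 2)) ∧ (∀ x ∉ closedBall c r, fderiv ℝ u x = 0) ∧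
      ∀ x, ‖fderiv ℝ u x‖ ≤ M / r := by
  let f : ContDiffBump (0 : E) := ⟨1 / 2, 1, by norm_num, by norm_num⟩
  obtain ⟨M, hM⟩ := (f.hasCompactSupport.fderiv ℝ).exists_bound_of_continuous
    (f.contDiff.continuous_fderiv one_ne_zero)
  refine ⟨M, (norm_nonneg _).trans (hM 0), fun c r hr => ?_⟩
  have hfderiv : ∀ x, fderiv ℝ (fun x => f (r⁻¹ • (x - c))) x = r⁻¹ • fderiv ℝ f (r⁻¹ • (x - c)) :=
    fun x => by rw [fderiv_comp_sub (f := fun y => f (r⁻¹ • y)), fderiv_comp_smul]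
  have hmem : ∀ x s, r⁻¹ • (x - c) ∈ closedBall 0 s ↔ x ∈ closedBall c (s * r) := fun x s => by
    rw [mem_closedBall_zero_iff, norm_smul, Real.norm_eq_abs, abs_inv, abs_of_pos hr,
      inv_mul_le_iff₀ hr, mul_comm, mem_closedBall, dist_eq_norm]
  refine ⟨fun x => f (r⁻¹ • (x - c)),
    f.contDiff.comp ((contDiff_id.sub contDiff_const).const_smul _),
    ?_, fun x hx => ?_, fun x hx => ?_, fun x => ?_⟩
  · refine HasCompactSupport.intro (isCompact_closedBall c r) fun x hx => f.zero_of_le_dist ?_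
    have := (hmem x 1).not.mpr (by rwa [one_mul])
    rw [mem_closedBall_zero_iff, not_le] at this
    rw [dist_zero_right]
    exact this.le
  · exact f.one_of_mem_closedBall ((hmem x _).mpr (by rwa [one_div_mul_eq_div]))
  · rw [← one_mul r, ← hmem, ← f.tsupport_eq] at hx
    rw [hfderiv, image_eq_zero_of_notMem_tsupport fun h => hx (tsupport_fderiv_subset ℝ h),
      smul_zero]
  · rw [hfderiv, norm_smul, Real.norm_eq_abs, abs_inv, abs_of_pos hr, inv_mul_eq_div]
    exact div_le_div_of_nonneg_right (hM _) hr.le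

lemma min_rpow_le_rpow_of_mem_Icc {lo hi a : ℝ} (hlo : 0 < lo) (ha : a ∈ Icc lo hi) (t : ℝ) :
    min (lo ^ t) (hi ^ t) ≤ a ^ t := by
  rcases le_total 0 t with ht | ht
  · exact (min_le_left _ _).trans (Real.rpow_le_rpow hlo.le ha.1 ht)
  · exact (min_le_right _ _).trans (Real.rpow_le_rpow_of_nonpos (hlo.trans_le ha.1) ha.2 ht)

lemma rpow_le_max_rpow_of_mem_Icc {lo hi a : ℝ} (hlo : 0 < lo) (ha : a ∈ Icc lo hi) (t : ℝ) :
    a ^ t ≤ max (lo ^ t) (hi ^ t) := by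
  rcases le_total 0 t with ht | ht
  · exact (Real.rpow_le_rpow (hlo.le.trans ha.1) ha.2 ht).trans (le_max_right _ _)
  · exact (Real.rpow_le_rpow_of_nonpos hlo ha.1 ht).trans (le_max_left _ _)

lemma rpow_mul_rpow_mem_Icc {a b δ lo hi lo' hi' : ℝ} (hlo : 0 < lo) (hlo' : 0 < lo')
    (hδ : 0 < δ) (ha : a ∈ Icc lo hi) (hb : b / δ ∈ Icc lo' hi') (s t : ℝ) :
    a ^ s * b ^ t ∈ Icc (min (lo ^ s) (hi ^ s) * min (lo' ^ t) (hi' ^ t) * δ ^ t)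
      (max (lo ^ s) (hi ^ s) * max (lo' ^ t) (hi' ^ t) * δ ^ t) := by
  have hb0 : 0 < b := (div_pos_iff_of_pos_right hδ).mp (hlo'.trans_le hb.1)
  have hbt : b ^ t = (b / δ) ^ t * δ ^ t := by
    rw [Real.div_rpow hb0.le hδ.le, div_mul_cancel₀ _ (Real.rpow_pos_of_pos hδ t).ne']
  have hδt := Real.rpow_pos_of_pos hδ t
  have hhi' : 0 < hi' := hlo'.trans_le (hb.1.trans hb.2)
  rw [hbt, ← mul_assoc]
  refine ⟨mul_le_mul_of_nonneg_right ?_ hδt.le, mul_le_mul_of_nonneg_right ?_ hδt.le⟩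
  · exact mul_le_mul (min_rpow_le_rpow_of_mem_Icc hlo ha s) (min_rpow_le_rpow_of_mem_Icc hlo' hb t)
      (by positivity) (Real.rpow_nonneg (hlo.le.trans ha.1) s)
  · exact mul_le_mul (rpow_le_max_rpow_of_mem_Icc hlo ha s) (rpow_le_max_rpow_of_mem_Icc hlo' hb t)
      (Real.rpow_nonneg (div_pos hb0 hδ).le t)
      ((Real.rpow_pos_of_pos hlo s).le.trans (le_max_left _ _))

lemma mul_measure_le_lintegral_of_le {α : Type*} [MeasurableSpace α] {μ : Measure α} {s : Set α}
    (hs : MeasurableSet s) {f : α → ENNReal} {a : ENNReal} (h : ∀ x ∈ s, a ≤ f x) :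
    a * μ s ≤ ∫⁻ x, f x ∂μ :=
  calc a * μ s = ∫⁻ _ in s, a ∂μ := (setLIntegral_const s a).symm
    _ ≤ ∫⁻ x in s, f x ∂μ := setLIntegral_mono' hs h
    _ ≤ ∫⁻ x, f x ∂μ := setLIntegral_le_lintegral s f

lemma lintegral_le_mul_measure_of_le {α : Type*} [MeasurableSpace α] {μ : Measure α} {s : Set α}
    (hs : MeasurableSet s) {f : α → ENNReal} {b : ENNReal} (h : ∀ x ∈ s, f x ≤ b)
    (h0 : ∀ x ∉ s, f x = 0) : ∫⁻ x, f x ∂μ ≤ b * μ s :=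
  calc ∫⁻ x, f x ∂μ = ∫⁻ x in s, f x ∂μ :=
        (setLIntegral_eq_of_support_subset fun x hx => by_contra fun h' => hx (h0 x h')).symm
    _ ≤ ∫⁻ _ in s, b ∂μ := setLIntegral_mono' hs h
    _ = b * μ s := setLIntegral_const s b

lemma exists_pos_le_mul_rpow_lt (K : ℝ) {A q δ₀ : ℝ} (hA : 0 < A) (hq : 0 < q) (hδ₀ : 0 < δ₀) :
    ∃ δ, 0 < δ ∧ δ ≤ δ₀ ∧ K * δ ^ q < A := by
  have hlim : Tendsto (fun δ : ℝ => K * δ ^ q) (𝓝[>] 0) (𝓝 0) := by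
    have := ((Real.continuousAt_rpow_const 0 q (Or.inr hq.le)).const_mul K).tendsto
    rw [Real.zero_rpow hq.ne', mul_zero] at this
    exact this.mono_left nhdsWithin_le_nhds
  have hIoc : ∀ᶠ δ in 𝓝[>] (0 : ℝ), δ ∈ Ioc 0 δ₀ := Ioc_mem_nhdsGT hδ₀
  obtain ⟨δ, hδ, hsmall⟩ := (hIoc.and (hlim.eventually (gt_mem_nhds hA))).exists
  exact ⟨δ, hδ.1, hδ.2, hsmall⟩

lemma ofReal_mul_rpow_one_div_lt {I J : ENNReal} {X Y C p : ℝ} (hp : 0 < p) (hC : 0 ≤ C)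
    (hY : 0 ≤ Y) (hI : ENNReal.ofReal X ≤ I) (hJ : J ≤ ENNReal.ofReal Y) (hXY : C ^ p * Y < X) :
    ENNReal.ofReal C * J ^ (1 / p) < I ^ (1 / p) := by
  have hp' : 0 < 1 / p := one_div_pos.mpr hp
  have hX : 0 ≤ X := by have := Real.rpow_nonneg hC p; nlinarith
  have hroot : C * Y ^ (1 / p) < X ^ (1 / p) := by
    calc C * Y ^ (1 / p) = (C ^ p * Y) ^ (1 / p) := by
          rw [Real.mul_rpow (Real.rpow_nonneg hC p) hY, ← Real.rpow_mul hC,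
            mul_one_div_cancel hp.ne', Real.rpow_one]
      _ < X ^ (1 / p) := Real.rpow_lt_rpow (by positivity) hXY hp'
  calc ENNReal.ofReal C * J ^ (1 / p) ≤ ENNReal.ofReal C * ENNReal.ofReal Y ^ (1 / p) := by gcongr
    _ = ENNReal.ofReal (C * Y ^ (1 / p)) := by
      rw [ENNReal.ofReal_rpow_of_nonneg hY hp'.le, ENNReal.ofReal_mul hC]
    _ < ENNReal.ofReal (X ^ (1 / p)) :=
      (ENNReal.ofReal_lt_ofReal_iff (hroot.trans_le' (by positivity))).mpr hroot
    _ = ENNReal.ofReal X ^ (1 / p) := (ENNReal.ofReal_rpow_of_nonneg hX hp'.le).symm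
    _ ≤ I ^ (1 / p) := by gcongr

lemma volume_closedBall_eq_ofReal {n : ℕ} (c : EuclideanSpace ℝ (Fin n)) {r : ℝ} (hr : 0 ≤ r) :
    volume (closedBall c r) =
      ENNReal.ofReal (r ^ n * volume.real (ball (0 : EuclideanSpace ℝ (Fin n)) 1)) := by
  rw [Measure.addHaar_closedBall volume c hr, finrank_euclideanSpace_fin,
    ENNReal.ofReal_mul (by positivity), ofReal_measureReal]

lemma exists_testFunction_lintegral_bounds {n : ℕ} (hn : 2 ≤ n) {p : ℝ} (hp : 0 < p)
    (α β γ α' : ℝ) :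
    ∃ A > 0, ∃ B ≥ 0, ∀ δ, 0 < δ → δ ≤ 1 / 6 → ∃ u : EuclideanSpace ℝ (Fin n) → ℝ,
      ContDiff ℝ 1 u ∧ HasCompactSupport u ∧
      ENNReal.ofReal (A * δ ^ (α * p + n)) ≤
        ∫⁻ x, ENNReal.ofReal ((‖x‖ ^ β * primeNorm x ^ α * |u x|) ^ p) ∧
      ∫⁻ x, ENNReal.ofReal ((‖x‖ ^ γ * primeNorm x ^ (α' + 1) * ‖fderiv ℝ u x‖) ^ p) ≤
        ENNReal.ofReal (B * δ ^ (α' * p + n)) := by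
  obtain ⟨M, hM, hbump⟩ := exists_bump_norm_fderiv_le (E := EuclideanSpace ℝ (Fin n))
  set V := volume.real (ball (0 : EuclideanSpace ℝ (Fin n)) 1)
  have hV : 0 < V := ENNReal.toReal_pos (measure_ball_pos volume _ one_pos).ne' (by finiteness)
  set m := min ((1 / 2 : ℝ) ^ β) (2 ^ β) * min ((1 : ℝ) ^ α) (3 ^ α)
  set K := max ((1 / 2 : ℝ) ^ γ) (2 ^ γ) * max ((1 : ℝ) ^ (α' + 1)) (3 ^ (α' + 1))
  have hm : 0 < m := by positivity
  refine ⟨m ^ p * (1 / 2) ^ n * V, by positivity, (K * M) ^ p * V, by positivity,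
    fun δ hδ hδ6 => ?_⟩
  obtain ⟨c, hc, hc'⟩ := exists_primeNorm_eq_and_abs_norm_sub_one_le hn (by positivity : 0 ≤ 2 * δ)
  obtain ⟨u, hu, hsupp, hone, hzero, hderiv⟩ := hbump c hδ
  have hweight := fun x (hx : x ∈ closedBall c δ) =>
    have hx' := norm_mem_Icc_and_primeNorm_div_mem_Icc hδ hδ6 hc hc' hx
    rpow_mul_rpow_mem_Icc (by norm_num) one_pos hδ hx'.1 hx'.2
  refine ⟨u, hu, hsupp, ?_, ?_⟩
  · calc ENNReal.ofReal (m ^ p * (1 / 2) ^ n * V * δ ^ (α * p + n))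
        = ENNReal.ofReal ((m * δ ^ α) ^ p) * volume (closedBall c (δ / 2)) := by
          rw [volume_closedBall_eq_ofReal c (by positivity),
            ← ENNReal.ofReal_mul (by positivity), Real.mul_rpow hm.le (by positivity),
            ← Real.rpow_mul hδ.le, Real.rpow_add hδ, Real.rpow_natCast]
          congr 1
          rw [div_pow, div_pow, one_pow]
          ring
      _ ≤ _ := by
          refine mul_measure_le_lintegral_of_le measurableSet_closedBall fun x hx => ?_
          rw [hone hx, Pi.one_apply, abs_one, mul_one]
          refine ENNReal.ofReal_le_ofReal (Real.rpow_le_rpow (by positivity) ?_ hp.le)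
          exact (hweight x (closedBall_subset_closedBall (by linarith) hx) β α).1
  · calc _ ≤ ENNReal.ofReal ((K * δ ^ (α' + 1) * (M / δ)) ^ p) * volume (closedBall c δ) := by
          refine lintegral_le_mul_measure_of_le measurableSet_closedBall (fun x hx => ?_)
            fun x hx => by rw [hzero x hx, norm_zero, mul_zero, Real.zero_rpow hp.ne',
              ENNReal.ofReal_zero]
          have := primeNorm_nonneg x
          refine ENNReal.ofReal_le_ofReal (Real.rpow_le_rpow (by positivity) ?_ hp.le)
          exact mul_le_mul (hweight x hx γ (α' + 1)).2 (hderiv x) (norm_nonneg _)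
            (by positivity)
      _ = ENNReal.ofReal ((K * M) ^ p * V * δ ^ (α' * p + n)) := by
          rw [volume_closedBall_eq_ofReal c hδ.le, ← ENNReal.ofReal_mul (by positivity),
            Real.rpow_add_one hδ.ne',
            show K * (δ ^ α' * δ) * (M / δ) = K * M * δ ^ α' by field_simp,
            Real.mul_rpow (by positivity) (by positivity), ← Real.rpow_mul hδ.le,
            Real.rpow_add hδ, Real.rpow_natCast]
          congr 1
          ring

theorem stmt1 (n : ℕ) (hn : 2 ≤ n) (p α β α' : ℝ) (hp1 : 1 ≤ p) (hα' : α' > α) :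
    ∀ C > 0, ∃ u : EuclideanSpace ℝ (Fin n) → ℝ,
      ContDiff ℝ 1 u ∧ HasCompactSupport u ∧
      (∫⁻ x, ENNReal.ofReal ((‖x‖ ^ β * primeNorm x ^ α * |u x|) ^ p)) ^ (1 / p)
        > ENNReal.ofReal C *
          (∫⁻ x, ENNReal.ofReal
              ((‖x‖ ^ (β + α - α') * primeNorm x ^ (α' + 1) * ‖fderiv ℝ u x‖) ^ p)) ^ (1 / p) := by
  intro C hC
  have hp : 0 < p := by linarith
  obtain ⟨A, hA, B, hB, htest⟩ := exists_testFunction_lintegral_bounds hn hp α β (β + α - α') α'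
  obtain ⟨δ, hδ, hδ6, hsmall⟩ :=
    exists_pos_le_mul_rpow_lt (C ^ p * B) hA (mul_pos (sub_pos.mpr hα') hp)
      (δ₀ := 1 / 6) (by norm_num)
  obtain ⟨u, hu, hsupp, hI, hJ⟩ := htest δ hδ hδ6
  refine ⟨u, hu, hsupp, ofReal_mul_rpow_one_div_lt hp hC.le (by positivity) hI hJ ?_⟩
  calc C ^ p * (B * δ ^ (α' * p + n)) = C ^ p * B * δ ^ ((α' - α) * p) * δ ^ (α * p + n) := by
        rw [mul_assoc _ _ (δ ^ _), ← Real.rpow_add hδ]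
        ring_nf
    _ < A * δ ^ (α * p + n) := mul_lt_mul_of_pos_right hsmall (Real.rpow_pos_of_pos hδ _)
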